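/- If both ℓ^p and ℓ^m are the least squares loss (ℓ(r) = ½‖r‖²), G is invertible, and Q, R are PSD with square roots Q^{1/2}, R^{1/2}, then the KKT saddle-point matrix of the singular smoothing Lagrangian is invertible if and only if H G^{-1} Q G^{-T} H^T + R is invertible, if and only if Null(R) ∩ Null(Q G^{-T} H^T) = {0}. -/

import Mathlib

/-!
Write the KKT system in the variables `(x, rᵖ, rᵐ, λᵖ, λᵐ)`. Since `G` is invertible, the
equations express `λᵖ`, `rᵖ`, `rᵐ` and `x` in terms of `λᵐ`, and the remaining equation says
exactly that the Schur complement `S = H G⁻¹ Q G⁻ᵀ Hᵀ + R` kills `λᵐ`; so the kernel of the KKT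
matrix is trivial iff that of `S` is. With `M = H G⁻¹ Q^{1/2}` we have
`S = M Mᵀ + R^{1/2} R^{1/2}ᵀ`, a sum of Gram matrices, whose kernel is `ker Mᵀ ∩ ker R^{1/2}ᵀ`;
these are `ker (Q G⁻ᵀ Hᵀ)` and `ker R`.
-/

open Matrix

theorem Sum.elim_eq_zero_iff {α β γ : Type*} [Zero γ] {f : α → γ} {g : β → γ} :
    Sum.elim f g = 0 ↔ f = 0 ∧ g = 0 := by
  rw [← Sum.elim_zero_zero, Sum.elim_eq_iff]

namespace Matrix

section OrderedField

variable {𝕜 : Type*} [Field 𝕜] [LinearOrder 𝕜] [IsStrictOrderedRing 𝕜]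
  {l m n : Type*} [Fintype l] [Fintype m] [Fintype n]

theorem ker_mulVecLin_mul_transpose_self (A : Matrix m n 𝕜) :
    LinearMap.ker (A * Aᵀ).mulVecLin = LinearMap.ker Aᵀ.mulVecLin := by
  simpa using ker_mulVecLin_transpose_mul_self Aᵀ

theorem ker_mulVecLin_mul_transpose_self_mul (A : Matrix m n 𝕜) (C : Matrix m l 𝕜) :
    LinearMap.ker (A * Aᵀ * C).mulVecLin = LinearMap.ker (Aᵀ * C).mulVecLin := by
  rw [mulVecLin_mul (A * Aᵀ), LinearMap.ker_comp, ker_mulVecLin_mul_transpose_self,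
    mulVecLin_mul, LinearMap.ker_comp]

theorem ker_mulVecLin_mul_transpose_self_add (A : Matrix m n 𝕜) (B : Matrix m l 𝕜) :
    LinearMap.ker (A * Aᵀ + B * Bᵀ).mulVecLin =
      LinearMap.ker Aᵀ.mulVecLin ⊓ LinearMap.ker Bᵀ.mulVecLin := by
  rw [← fromCols_mul_fromRows, ← transpose_fromCols, ker_mulVecLin_mul_transpose_self,
    transpose_fromCols]
  ext v
  simp only [LinearMap.mem_ker, Submodule.mem_inf, mulVecLin_apply, fromRows_mulVec,
    Sum.elim_eq_zero_iff]

end OrderedField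

theorem isUnit_iff_ker_mulVecLin_eq_bot {K n : Type*} [Field K] [Fintype n] [DecidableEq n]
    {A : Matrix n n K} : IsUnit A ↔ LinearMap.ker A.mulVecLin = ⊥ := by
  rw [← mulVec_injective_iff_isUnit, LinearMap.ker_eq_bot, coe_mulVecLin]

theorem mulVec_eq_iff_eq_nonsing_inv_mulVec {R n : Type*} [CommRing R] [Fintype n]
    [DecidableEq n] {A : Matrix n n R} (hA : IsUnit A.det) {x y : n → R} :
    A *ᵥ x = y ↔ x = A⁻¹ *ᵥ y := by
  constructor <;> rintro rfl <;>
    simp [mulVec_mulVec, nonsing_inv_mul _ hA, mul_nonsing_inv _ hA]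

end Matrix

section KKT

variable {R : Type*} {n m : Type*} [Fintype n] [Fintype m] [DecidableEq n] [DecidableEq m]
  (G Qh : Matrix n n R) (H : Matrix m n R) (Rh : Matrix m m R)

/-- The KKT matrix of the least-squares smoothing Lagrangian in the variable order
`(x, rᵖ, rᵐ, λᵖ, λᵐ)`, with `Qh = Q^{1/2}` and `Rh = R^{1/2}`. -/
def kktMatrix [Ring R] : Matrix (n ⊕ n ⊕ m ⊕ n ⊕ m) (n ⊕ n ⊕ m ⊕ n ⊕ m) R :=
  fromRows (fromCols 0 (fromCols 0 (fromCols 0 (fromCols Gᵀ Hᵀ)))) <|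
  fromRows (fromCols 0 (fromCols 1 (fromCols 0 (fromCols (-Qhᵀ) 0)))) <|
  fromRows (fromCols 0 (fromCols 0 (fromCols 1 (fromCols 0 (-Rhᵀ))))) <|
  fromRows (fromCols G (fromCols (-Qh) (fromCols 0 (fromCols 0 0))))
    (fromCols H (fromCols 0 (fromCols (-Rh) (fromCols 0 0))))

theorem kktMatrix_mulVec [Ring R] (x rp : n → R) (rm : m → R) (lp : n → R) (lm : m → R) :
    kktMatrix G Qh H Rh *ᵥ Sum.elim x (Sum.elim rp (Sum.elim rm (Sum.elim lp lm))) =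
      Sum.elim (Gᵀ *ᵥ lp + Hᵀ *ᵥ lm) (Sum.elim (rp - Qhᵀ *ᵥ lp) (Sum.elim (rm - Rhᵀ *ᵥ lm)
        (Sum.elim (G *ᵥ x - Qh *ᵥ rp) (H *ᵥ x - Rh *ᵥ rm)))) := by
  simp only [kktMatrix, fromRows_mulVec, fromCols_mulVec_sumElim, zero_mulVec, one_mulVec,
    neg_mulVec, zero_add, add_zero, sub_eq_add_neg]

variable {G}

theorem kktMatrix_mulVec_eq_zero_iff [CommRing R] (hG : IsUnit G.det) (x rp : n → R)
    (rm : m → R) (lp : n → R) (lm : m → R) :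
    kktMatrix G Qh H Rh *ᵥ Sum.elim x (Sum.elim rp (Sum.elim rm (Sum.elim lp lm))) = 0 ↔
      (H * G⁻¹ * (Qh * Qhᵀ) * (G⁻¹)ᵀ * Hᵀ + Rh * Rhᵀ) *ᵥ lm = 0 ∧
        lp = -((G⁻¹)ᵀ *ᵥ Hᵀ *ᵥ lm) ∧ rp = Qhᵀ *ᵥ lp ∧ rm = Rhᵀ *ᵥ lm ∧
          x = G⁻¹ *ᵥ Qh *ᵥ rp := by
  have hGT : IsUnit Gᵀ.det := by rwa [det_transpose]
  simp only [kktMatrix_mulVec, Sum.elim_eq_zero_iff, add_eq_zero_iff_eq_neg, sub_eq_zero,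
    mulVec_eq_iff_eq_nonsing_inv_mulVec hG, mulVec_eq_iff_eq_nonsing_inv_mulVec hGT,
    ← transpose_nonsing_inv, mulVec_neg]
  have hschur : H *ᵥ G⁻¹ *ᵥ Qh *ᵥ Qhᵀ *ᵥ -(G⁻¹ᵀ *ᵥ Hᵀ *ᵥ lm) - Rh *ᵥ Rhᵀ *ᵥ lm =
      -((H * G⁻¹ * (Qh * Qhᵀ) * G⁻¹ᵀ * Hᵀ + Rh * Rhᵀ) *ᵥ lm) := by
    simp only [add_mulVec, ← mulVec_mulVec, mulVec_neg, neg_add, sub_eq_add_neg]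
  constructor
  · rintro ⟨rfl, rfl, rfl, rfl, h⟩
    exact ⟨by rw [← neg_eq_zero, ← hschur, h, sub_self], rfl, rfl, rfl, rfl⟩
  · rintro ⟨h, rfl, rfl, rfl, rfl⟩
    exact ⟨rfl, rfl, rfl, rfl, by rw [← sub_eq_zero, hschur, h, neg_zero]⟩

theorem isUnit_kktMatrix_iff [Field R] (hG : IsUnit G.det) :
    IsUnit (kktMatrix G Qh H Rh) ↔
      IsUnit (H * G⁻¹ * (Qh * Qhᵀ) * (G⁻¹)ᵀ * Hᵀ + Rh * Rhᵀ) := by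
  simp only [isUnit_iff_ker_mulVecLin_eq_bot, ker_mulVecLin_eq_bot_iff]
  constructor
  · intro hK lm hlm
    have hv := hK _ ((kktMatrix_mulVec_eq_zero_iff Qh H Rh hG _ _ _ _ lm).2
      ⟨hlm, rfl, rfl, rfl, rfl⟩)
    simp only [Sum.elim_eq_zero_iff] at hv
    exact hv.2.2.2.2
  · intro hS v hv
    obtain ⟨x, rp, rm, lp, lm, rfl⟩ : ∃ x rp rm lp lm,
        v = Sum.elim x (Sum.elim rp (Sum.elim rm (Sum.elim lp lm))) :=
      ⟨v ∘ .inl, v ∘ .inr ∘ .inl, v ∘ .inr ∘ .inr ∘ .inl, v ∘ .inr ∘ .inr ∘ .inr ∘ .inl,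
        v ∘ .inr ∘ .inr ∘ .inr ∘ .inr, by ext (_ | _ | _ | _ | _) <;> rfl⟩
    obtain ⟨hlm, rfl, rfl, rfl, rfl⟩ := (kktMatrix_mulVec_eq_zero_iff Qh H Rh hG _ _ _ _ _).1 hv
    simp [hS lm hlm]

end KKT

/-- Least-squares singular smoother: with `ℓᵖ = ℓᵐ = ½‖·‖²` (so the loss Hessian
blocks are identities), `G` invertible, `Q = Qh Qhᵀ`, `R = Rh Rhᵀ`, the KKT
saddle-point matrix is invertible iff `H G⁻¹ Q G⁻ᵀ Hᵀ + R` is invertible, iff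
`Null(R) ∩ Null(Q G⁻ᵀ Hᵀ) = {0}`. -/
theorem kkt_least_squares_invertible_iff
    {d p : ℕ}
    (G Qh : Matrix (Fin d) (Fin d) ℝ)
    (H : Matrix (Fin p) (Fin d) ℝ)
    (Rh : Matrix (Fin p) (Fin p) ℝ)
    (hG : IsUnit G.det)
    (Q : Matrix (Fin d) (Fin d) ℝ) (hQ : Q = Qh * Qhᵀ)
    (R : Matrix (Fin p) (Fin p) ℝ) (hR : R = Rh * Rhᵀ)
    (K : Matrix (Fin d ⊕ Fin d ⊕ Fin p ⊕ Fin d ⊕ Fin p)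
               (Fin d ⊕ Fin d ⊕ Fin p ⊕ Fin d ⊕ Fin p) ℝ)
    (hK : K = Matrix.of fun i j =>
      match i, j with
      | Sum.inl a, Sum.inr (Sum.inr (Sum.inr (Sum.inl b))) => Gᵀ a b
      | Sum.inl a, Sum.inr (Sum.inr (Sum.inr (Sum.inr b))) => Hᵀ a b
      | Sum.inr (Sum.inl a), Sum.inr (Sum.inl b) => if a = b then (1 : ℝ) else 0
      | Sum.inr (Sum.inl a), Sum.inr (Sum.inr (Sum.inr (Sum.inl b))) => -Qhᵀ a b
      | Sum.inr (Sum.inr (Sum.inl a)), Sum.inr (Sum.inr (Sum.inl b)) =>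
          if a = b then (1 : ℝ) else 0
      | Sum.inr (Sum.inr (Sum.inl a)), Sum.inr (Sum.inr (Sum.inr (Sum.inr b))) => -Rhᵀ a b
      | Sum.inr (Sum.inr (Sum.inr (Sum.inl a))), Sum.inl b => G a b
      | Sum.inr (Sum.inr (Sum.inr (Sum.inl a))), Sum.inr (Sum.inl b) => -Qh a b
      | Sum.inr (Sum.inr (Sum.inr (Sum.inr a))), Sum.inl b => H a b
      | Sum.inr (Sum.inr (Sum.inr (Sum.inr a))), Sum.inr (Sum.inr (Sum.inl b)) => -Rh a b
      | _, _ => 0) :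
    (IsUnit K ↔ IsUnit (H * G⁻¹ * Q * (G⁻¹)ᵀ * Hᵀ + R)) ∧
    (IsUnit (H * G⁻¹ * Q * (G⁻¹)ᵀ * Hᵀ + R) ↔
      LinearMap.ker R.mulVecLin ⊓
        LinearMap.ker (Q * (G⁻¹)ᵀ * Hᵀ).mulVecLin = ⊥) := by
  subst hQ hR
  obtain rfl : K = kktMatrix G Qh H Rh := by
    subst hK
    ext (i | i | i | i | i) (j | j | j | j | j) <;> rfl
  have hS : H * G⁻¹ * (Qh * Qhᵀ) * (G⁻¹)ᵀ * Hᵀ =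
      (H * G⁻¹ * Qh) * (H * G⁻¹ * Qh)ᵀ := by
    simp only [transpose_mul, Matrix.mul_assoc]
  refine ⟨isUnit_kktMatrix_iff Qh H Rh hG, ?_⟩
  rw [isUnit_iff_ker_mulVecLin_eq_bot, hS, ker_mulVecLin_mul_transpose_self_add,
    ker_mulVecLin_mul_transpose_self, Matrix.mul_assoc (Qh * Qhᵀ),
    ker_mulVecLin_mul_transpose_self_mul, inf_comm,
    transpose_mul, transpose_mul]
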